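/- For x > 0, ε > 0, t > 0, the series Σ_{k≥1} erfc((x + (2k−1)ε)/√(2t)) converges, and it is bounded above by (√(2t)/(2ε√π))·e^{−x²/(2t)} + 1. -/

import Mathlib

/-!
Write `G(y) = ∫_y^∞ e^{-u²} du`, so that the `k`-th term is `(2/√π) G(b + kδ)` with
`b = (x + ε)/√(2t)` and `δ = 2ε/√(2t)`. Exchanging sum and integral,
`∑_{k ≥ 1} G(b + kδ) = ∫_b^∞ N(u) e^{-u²} du` with `N(u) = #{k ≥ 1 : b + kδ < u} ≤ (u - b)/δ`,
so this part of the series is at most `δ⁻¹ ∫_b^∞ u e^{-u²} du = e^{-b²}/(2δ)`.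
The term `k = 0` is `erfc b ≤ erfc 0 = 1`.
-/

open MeasureTheory Set Real
open scoped Finset

/-- The complementary error function `erfc x = (2/√π) ∫_x^∞ e^{-u²} du`. -/
noncomputable def erfc (x : ℝ) : ℝ :=
  (2 / Real.sqrt Real.pi) * ∫ u in Set.Ioi x, Real.exp (-u ^ 2)

lemma card_filter_add_succ_mul_lt_le {b δ u : ℝ} (hδ : 0 < δ) (hbu : b ≤ u) (n : ℕ) :
    (#((Finset.range n).filter fun k : ℕ => b + (k + 1) * δ < u) : ℝ) ≤ (u - b) / δ := by
  have hsub : (Finset.range n).filter (fun k : ℕ => b + (k + 1) * δ < u) ⊆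
      Finset.range ⌊(u - b) / δ⌋₊ := by
    intro k hk
    rw [Finset.mem_filter] at hk
    rw [Finset.mem_range, ← Nat.succ_le_iff]
    refine Nat.le_floor ?_
    rw [le_div_iff₀ hδ]
    push_cast
    linarith [hk.2]
  calc _ ≤ (⌊(u - b) / δ⌋₊ : ℝ) := by
        exact_mod_cast (Finset.card_le_card hsub).trans_eq (Finset.card_range _)
    _ ≤ (u - b) / δ := Nat.floor_le (div_nonneg (sub_nonneg.2 hbu) hδ.le)

lemma sum_setIntegral_Ioi_add_succ_mul_le {φ : ℝ → ℝ} (hφ : Integrable φ) (hφ0 : 0 ≤ φ)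
    {b δ : ℝ} (hδ : 0 < δ) (hφb : IntegrableOn (fun u => (u - b) * φ u) (Ioi b)) (n : ℕ) :
    ∑ k ∈ Finset.range n, ∫ u in Ioi (b + (k + 1) * δ), φ u ≤
      δ⁻¹ * ∫ u in Ioi b, (u - b) * φ u := by
  have hcount : ∀ u, ∑ k ∈ Finset.range n, (Ioi (b + (k + 1) * δ)).indicator φ u ≤
      (Ioi b).indicator (fun u => δ⁻¹ * ((u - b) * φ u)) u := by
    intro u
    by_cases hbu : b < u
    · simp only [indicator_apply, Set.mem_Ioi, hbu, ← Finset.sum_filter, Finset.sum_const,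
        nsmul_eq_mul, if_true]
      calc (#((Finset.range n).filter fun k : ℕ => b + (k + 1) * δ < u) : ℝ) * φ u
          ≤ (u - b) / δ * φ u :=
            mul_le_mul_of_nonneg_right (card_filter_add_succ_mul_lt_le hδ hbu.le n) (hφ0 u)
        _ = δ⁻¹ * ((u - b) * φ u) := by ring
    · have hk : ∀ k : ℕ, ¬ b + (k + 1) * δ < u := fun k h => hbu (by nlinarith)
      simp [hk, hbu]
  rw [← integral_const_mul, ← integral_indicator measurableSet_Ioi]
  simp_rw [← integral_indicator measurableSet_Ioi]
  rw [← integral_finsetSum _ fun k _ => hφ.indicator measurableSet_Ioi]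
  exact integral_mono (integrable_finsetSum _ fun k _ => hφ.indicator measurableSet_Ioi)
    (IntegrableOn.integrable_indicator (hφb.const_mul δ⁻¹) measurableSet_Ioi) hcount

lemma integrable_exp_neg_sq : Integrable fun u : ℝ => Real.exp (-u ^ 2) := by
  simpa using integrable_exp_neg_mul_sq one_pos

lemma integrable_mul_exp_neg_sq : Integrable fun u : ℝ => u * Real.exp (-u ^ 2) := by
  simpa using integrable_mul_exp_neg_mul_sq one_pos

lemma integral_Ioi_mul_exp_neg_sq (a : ℝ) :
    ∫ u in Ioi a, u * Real.exp (-u ^ 2) = Real.exp (-a ^ 2) / 2 := by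
  have hderiv : ∀ u ∈ Ici a,
      HasDerivAt (fun v : ℝ => -Real.exp (-v ^ 2) / 2) (u * Real.exp (-u ^ 2)) u := by
    intro u _
    refine ((hasDerivAt_pow 2 u).neg.exp.neg.div_const 2).congr_deriv ?_
    simp only [Pi.neg_apply, Nat.cast_ofNat]
    ring
  have hlim : Filter.Tendsto (fun v : ℝ => -Real.exp (-v ^ 2) / 2) Filter.atTop (nhds 0) := by
    have hsq : Filter.Tendsto (fun v : ℝ => -v ^ 2) Filter.atTop Filter.atBot :=
      Filter.tendsto_neg_atTop_atBot.comp (Filter.tendsto_pow_atTop two_ne_zero)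
    simpa using (Real.tendsto_exp_atBot.comp hsq).neg.div_const 2
  rw [integral_Ioi_of_hasDerivAt_of_tendsto' hderiv integrable_mul_exp_neg_sq.integrableOn hlim]
  ring

lemma erfc_nonneg (y : ℝ) : 0 ≤ erfc y :=
  mul_nonneg (by positivity) (setIntegral_nonneg measurableSet_Ioi fun u _ => (Real.exp_pos _).le)

lemma erfc_le_one {y : ℝ} (hy : 0 ≤ y) : erfc y ≤ 1 := by
  have hmono : ∫ u in Ioi y, Real.exp (-u ^ 2) ≤ ∫ u in Ioi 0, Real.exp (-u ^ 2) :=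
    setIntegral_mono_set integrable_exp_neg_sq.integrableOn
      (Filter.Eventually.of_forall fun u => (Real.exp_pos _).le) (Ioi_subset_Ioi hy).eventuallyLE
  have hhalf : ∫ u in Ioi (0 : ℝ), Real.exp (-u ^ 2) = √π / 2 := by
    simpa using integral_gaussian_Ioi 1
  calc erfc y ≤ 2 / √π * (√π / 2) :=
        mul_le_mul_of_nonneg_left (hmono.trans_eq hhalf) (by positivity)
    _ = 1 := by field_simp

lemma sum_range_erfc_add_succ_mul_le {b δ : ℝ} (hb : 0 ≤ b) (hδ : 0 < δ) (n : ℕ) :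
    ∑ k ∈ Finset.range n, erfc (b + (k + 1) * δ) ≤
      Real.exp (-b ^ 2) / (δ * √π) := by
  have hweight : IntegrableOn (fun u => (u - b) * Real.exp (-u ^ 2)) (Ioi b) := by
    simp_rw [sub_mul]
    exact (integrable_mul_exp_neg_sq.sub (integrable_exp_neg_sq.const_mul b)).integrableOn
  have hmoment : ∫ u in Ioi b, (u - b) * Real.exp (-u ^ 2) ≤ Real.exp (-b ^ 2) / 2 := by
    rw [← integral_Ioi_mul_exp_neg_sq b]
    refine setIntegral_mono_on hweight integrable_mul_exp_neg_sq.integrableOn measurableSet_Ioi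
      fun u _ => ?_
    nlinarith [Real.exp_pos (-u ^ 2)]
  have hsum := sum_setIntegral_Ioi_add_succ_mul_le integrable_exp_neg_sq
    (fun u => (Real.exp_pos _).le) hδ hweight n
  calc ∑ k ∈ Finset.range n, erfc (b + (k + 1) * δ)
      = 2 / √π *
          ∑ k ∈ Finset.range n, ∫ u in Ioi (b + (k + 1) * δ), Real.exp (-u ^ 2) := by
        simp only [erfc, Finset.mul_sum]
    _ ≤ 2 / √π * (δ⁻¹ * (Real.exp (-b ^ 2) / 2)) := by
        gcongr
        exact hsum.trans (mul_le_mul_of_nonneg_left hmoment (by positivity))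
    _ = Real.exp (-b ^ 2) / (δ * √π) := by
        field_simp

lemma sum_range_erfc_add_mul_le {b δ : ℝ} (hb : 0 ≤ b) (hδ : 0 < δ) (n : ℕ) :
    ∑ k ∈ Finset.range n, erfc (b + k * δ) ≤ Real.exp (-b ^ 2) / (δ * √π) + 1 := by
  cases n with
  | zero => simp; positivity
  | succ n =>
    rw [Finset.sum_range_succ']
    push_cast
    simp only [zero_mul, add_zero]
    linarith [sum_range_erfc_add_succ_mul_le hb hδ n, erfc_le_one hb]

lemma summable_erfc_add_mul {b δ : ℝ} (hb : 0 ≤ b) (hδ : 0 < δ) :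
    Summable fun k : ℕ => erfc (b + k * δ) :=
  summable_of_sum_range_le (fun _ => erfc_nonneg _) (sum_range_erfc_add_mul_le hb hδ)

lemma tsum_erfc_add_mul_le {b δ : ℝ} (hb : 0 ≤ b) (hδ : 0 < δ) :
    ∑' k : ℕ, erfc (b + k * δ) ≤ Real.exp (-b ^ 2) / (δ * √π) + 1 :=
  Real.tsum_le_of_sum_range_le (fun _ => erfc_nonneg _) (sum_range_erfc_add_mul_le hb hδ)

/-- For `x, ε, t > 0`, the series `Σ_{k≥1} erfc((x + (2k-1)ε)/√(2t))` converges and is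
bounded by `(√(2t)/(2ε√π)) e^{-x²/(2t)} + 1`. -/
theorem brownian_barsThrough_series (x ε t : ℝ) (hx : 0 < x) (hε : 0 < ε) (ht : 0 < t) :
    Summable (fun k : ℕ => erfc ((x + (2 * ((k : ℝ) + 1) - 1) * ε) / Real.sqrt (2 * t))) ∧
    ∑' k : ℕ, erfc ((x + (2 * ((k : ℝ) + 1) - 1) * ε) / Real.sqrt (2 * t)) ≤
      Real.sqrt (2 * t) / (2 * ε * Real.sqrt Real.pi) * Real.exp (-x ^ 2 / (2 * t)) + 1 := by
  set c := √(2 * t)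
  have hc : 0 < c := Real.sqrt_pos.2 (by positivity)
  have hc2 : c ^ 2 = 2 * t := Real.sq_sqrt (by positivity)
  have hb : 0 ≤ (x + ε) / c := by positivity
  have hδ : 0 < 2 * ε / c := by positivity
  have harg : ∀ k : ℕ,
      (x + (2 * ((k : ℝ) + 1) - 1) * ε) / c = (x + ε) / c + k * (2 * ε / c) := by
    intro k
    field_simp
    ring
  have hexp : Real.exp (-((x + ε) / c) ^ 2) ≤ Real.exp (-x ^ 2 / (2 * t)) := by
    rw [Real.exp_le_exp, ← hc2, div_pow, neg_div]
    gcongr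
    linarith
  have hcoef : Real.exp (-((x + ε) / c) ^ 2) / (2 * ε / c * √π) ≤
      c / (2 * ε * √π) * Real.exp (-x ^ 2 / (2 * t)) := by
    calc _ = c / (2 * ε * √π) * Real.exp (-((x + ε) / c) ^ 2) := by
          field_simp
      _ ≤ _ := by gcongr
  simp only [harg]
  exact ⟨summable_erfc_add_mul hb hδ, (tsum_erfc_add_mul_le hb hδ).trans (by linarith)⟩
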